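/- Let (H,E) be an orthogonal semigroup of order m satisfying the CM condition. Then for all w, w' ∈ Soc(H,E): m·(Σ_{h ∈ Ap(H,E)} c_{w,h} − Σ_{h ∈ Ap(H,E)} c_{w',h}) = (deg w' − deg w)·|Ap(H,E)|. In particular, Σ_{h ∈ Ap(H,E)} c_{w,h} ≥ Σ_{h ∈ Ap(H,E)} c_{w',h} if and only if deg w ≤ deg w', with equality of the sums if and only if deg w = deg w'. (This is the combinatorial form of the monotonicity e(𝔟; K_R/t^vR) ≥ e(𝔟; K_R/t^{v'}R) whenever deg v ≥ deg v', for v = m e_1 + ⋯ + m e_d − w and v' = m e_1 + ⋯ + m e_d − w'.) -/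
import Mathlib


open scoped Classical

namespace AGpaper

/-- The degree of an integer vector: sum of coordinates. -/
def degZ {d : ℕ} (x : Fin d → ℤ) : ℤ := ∑ i, x i

/-- An orthogonal semigroup of order `m` in `ℕ^d`. -/
def IsOrthogonal (d m : ℕ) (H : AddSubmonoid (Fin d → ℤ)) : Prop :=
  H.FG ∧
  (∀ x ∈ H, ∀ i, 0 ≤ x i) ∧
  (∀ i : Fin d, Pi.single i (m : ℤ) ∈ H) ∧
  (∃ n : ℕ, 0 < n ∧ ∀ x ∈ H, ∀ i, (m : ℤ) ∣ (n : ℤ) * x i) ∧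
  (∀ i : Fin d, ∀ m' : ℕ, 0 < m' → m' < m → Pi.single i (m' : ℤ) ∉ H)

/-- Membership in `ℕE = ℕ(m e₁) + ⋯ + ℕ(m e_d)`. -/
def inNE (d m : ℕ) (x : Fin d → ℤ) : Prop := ∀ i : Fin d, 0 ≤ x i ∧ (m : ℤ) ∣ x i

/-- Membership in `ℤE = ℤ(m e₁) + ⋯ + ℤ(m e_d)`. -/
def inZE (d m : ℕ) (x : Fin d → ℤ) : Prop := ∀ i : Fin d, (m : ℤ) ∣ x i

/-- The Apéry set of an orthogonal semigroup w.r.t. its extreme rays `m eᵢ`. -/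
def apery (d m : ℕ) (H : AddSubmonoid (Fin d → ℤ)) : Set (Fin d → ℤ) :=
  {x | x ∈ H ∧ ∀ i : Fin d, x - Pi.single i (m : ℤ) ∉ H}

/-- The socle: maximal elements of the Apéry set with respect to `≤_H`. -/
def soc (d m : ℕ) (H : AddSubmonoid (Fin d → ℤ)) : Set (Fin d → ℤ) :=
  {x | x ∈ apery d m H ∧ ∀ y ∈ apery d m H, y - x ∈ H → x = y}

/-- The CM condition: every element of `G(H)` is uniquely `a + z`, `a ∈ Ap(H,E)`, `z ∈ ℤE`. -/
def CMcond (d m : ℕ) (H : AddSubmonoid (Fin d → ℤ)) : Prop :=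
  ∀ g ∈ AddSubgroup.closure (H : Set (Fin d → ℤ)),
    ∃! a, a ∈ apery d m H ∧ inZE d m (g - a)


lemma degZ_add {d : ℕ} (x y : Fin d → ℤ) : degZ (x + y) = degZ x + degZ y := by
  simp [degZ, Finset.sum_add_distrib]

theorem key_sum {d m : ℕ}
    (H : AddSubmonoid (Fin d → ℤ))
    (hCM : CMcond d m H)
    (A : Finset (Fin d → ℤ)) (hA : (A : Set (Fin d → ℤ)) = apery d m H)
    (v : Fin d → ℤ) (hv : v ∈ soc d m H)
    (c : (Fin d → ℤ) → (Fin d → ℤ) → ℕ)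
    (hc : ∀ h ∈ apery d m H, ∃ h' ∈ apery d m H, ∃ u : Fin d → ℤ,
      inNE d m u ∧ h + h' = v + u ∧ degZ u = (m : ℤ) * (c v h : ℤ)) :
    (m : ℤ) * ∑ h ∈ A, (c v h : ℤ) =
      2 * (∑ h ∈ A, degZ h) - (A.card : ℤ) * degZ v := by
  classical
  have hAm : ∀ x, x ∈ A ↔ x ∈ apery d m H := fun x => by
    rw [← Finset.mem_coe, hA]
  set φ : (Fin d → ℤ) → (Fin d → ℤ) :=
    fun h => if hh : h ∈ apery d m H then (hc h hh).choose else h with hφ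
  have hspec : ∀ h (hh : h ∈ apery d m H),
      φ h ∈ apery d m H ∧ ∃ u : Fin d → ℤ,
        inNE d m u ∧ h + φ h = v + u ∧ degZ u = (m : ℤ) * (c v h : ℤ) := by
    intro h hh
    have hs := (hc h hh).choose_spec
    simp only [hφ, dif_pos hh]
    exact ⟨hs.1, hs.2⟩
  have hvH : v ∈ H := hv.1.1
  have hinv : ∀ h, h ∈ apery d m H → φ (φ h) = h := by
    intro h hh
    obtain ⟨hφh, u, hu, hequ, -⟩ := hspec h hh
    obtain ⟨hφφh, u₂, hu₂, hequ₂, -⟩ := hspec (φ h) hφh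
    have hgcl : v - φ h ∈ AddSubgroup.closure (H : Set (Fin d → ℤ)) :=
      sub_mem (AddSubgroup.subset_closure hvH) (AddSubgroup.subset_closure hφh.1)
    have h1 : h ∈ apery d m H ∧ inZE d m ((v - φ h) - h) := by
      refine ⟨hh, fun i => ?_⟩
      have he : (v - φ h) - h = -u := by linear_combination -hequ
      rw [he]
      simpa using (hu i).2.neg_right
    have h2 : φ (φ h) ∈ apery d m H ∧ inZE d m ((v - φ h) - φ (φ h)) := by
      refine ⟨hφφh, fun i => ?_⟩
      have he : (v - φ h) - φ (φ h) = -u₂ := by linear_combination -hequ₂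
      rw [he]
      simpa using (hu₂ i).2.neg_right
    exact ((hCM _ hgcl).unique h2 h1)
  have hmaps : ∀ h ∈ A, φ h ∈ A := fun h hh =>
    (hAm _).2 (hspec h ((hAm _).1 hh)).1
  have hsumφ : ∑ h ∈ A, degZ (φ h) = ∑ h ∈ A, degZ h := by
    apply Finset.sum_nbij' (i := φ) (j := φ)
    · exact hmaps
    · exact hmaps
    · exact fun h hh => hinv h ((hAm _).1 hh)
    · exact fun h hh => hinv h ((hAm _).1 hh)
    · exact fun h hh => rfl
  calc (m : ℤ) * ∑ h ∈ A, (c v h : ℤ)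
      = ∑ h ∈ A, (m : ℤ) * (c v h : ℤ) := by rw [Finset.mul_sum]
    _ = ∑ h ∈ A, (degZ h + degZ (φ h) - degZ v) := by
        apply Finset.sum_congr rfl
        intro h hh
        obtain ⟨-, u, -, hequ, hdu⟩ := hspec h ((hAm _).1 hh)
        have : degZ h + degZ (φ h) = degZ v + degZ u := by
          rw [← degZ_add, ← degZ_add, hequ]
        rw [← hdu]; linarith
    _ = 2 * (∑ h ∈ A, degZ h) - (A.card : ℤ) * degZ v := by
        rw [Finset.sum_sub_distrib, Finset.sum_add_distrib, hsumφ, Finset.sum_const,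
          nsmul_eq_mul]
        ring

/-- Monotonicity of the multiplicity: for `w, w' ∈ Soc(H,E)`,
`m·(Σ_{h ∈ Ap} c_{w,h} - Σ_{h ∈ Ap} c_{w',h}) = (deg w' - deg w)·|Ap(H,E)|`; in
particular `Σ c_{w,h} ≥ Σ c_{w',h} ↔ deg w ≤ deg w'`, with equality of the sums iff
`deg w = deg w'`. -/
theorem mult_monotone {d m : ℕ} (hd : 1 ≤ d) (hm : 1 ≤ m)
    (H : AddSubmonoid (Fin d → ℤ)) (horth : IsOrthogonal d m H)
    (hCM : CMcond d m H)
    (A : Finset (Fin d → ℤ)) (hA : (A : Set (Fin d → ℤ)) = apery d m H)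
    (w w' : Fin d → ℤ) (hw : w ∈ soc d m H) (hw' : w' ∈ soc d m H)
    (c : (Fin d → ℤ) → (Fin d → ℤ) → ℕ)
    (hc : ∀ v ∈ soc d m H, ∀ h ∈ apery d m H, ∃ h' ∈ apery d m H, ∃ u : Fin d → ℤ,
      inNE d m u ∧ h + h' = v + u ∧ degZ u = (m : ℤ) * (c v h : ℤ)) :
    ((m : ℤ) * ((∑ h ∈ A, (c w h : ℤ)) - ∑ h ∈ A, (c w' h : ℤ)) =
      (degZ w' - degZ w) * (A.card : ℤ)) ∧
    ((∑ h ∈ A, c w' h ≤ ∑ h ∈ A, c w h) ↔ degZ w ≤ degZ w') ∧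
    ((∑ h ∈ A, c w h = ∑ h ∈ A, c w' h) ↔ degZ w = degZ w') := by
  have k1 := key_sum H hCM A hA w hw c (hc w hw)
  have k2 := key_sum H hCM A hA w' hw' c (hc w' hw')
  have hmain : (m : ℤ) * ((∑ h ∈ A, (c w h : ℤ)) - ∑ h ∈ A, (c w' h : ℤ)) =
      (degZ w' - degZ w) * (A.card : ℤ) := by
    rw [mul_sub, k1, k2]; ring
  have h0 : (0 : Fin d → ℤ) ∈ apery d m H := by
    refine ⟨H.zero_mem, fun i hmem => ?_⟩
    have := horth.2.1 _ hmem i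
    simp only [Pi.sub_apply, Pi.zero_apply, Pi.single_eq_same] at this
    omega
  have hcard : 0 < (A.card : ℤ) := by
    have : (0 : Fin d → ℤ) ∈ A := by rw [← Finset.mem_coe, hA]; exact h0
    exact_mod_cast Finset.card_pos.2 ⟨_, this⟩
  have hmZ : 0 < (m : ℤ) := by exact_mod_cast hm
  refine ⟨hmain, ?_, ?_⟩
  · rw [← Nat.cast_le (α := ℤ)]
    push_cast
    constructor <;> intro h <;> nlinarith
  · rw [← Nat.cast_inj (R := ℤ)]
    push_cast
    constructor <;> intro h <;> nlinarith

end AGpaper
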